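/- Let R > 0, ν > 1, and let l₁, l₂ > 0 with l₁ + l₂ = πR; set α₂ := sin(l₂/(2R)) and h₊(x) := (1/ν)( −sin²[x/(2R)] + cos[x/(2R)]√(ν² − sin²[x/(2R)]) ). Then ∫₀^{l₁} ( h₊(σ + l₂) − h₊(σ + πR) ) dσ = 2H(1,ν) − 2H(α₂,ν), where H(α,ν) := R( (α/ν)√(ν² − α²) + ν arcsin(α/ν) ). -/

import Mathlib

open Real intervalIntegral

/-- `h₊(x) = (1/ν)(−sin²[x/(2R)] + cos[x/(2R)] √(ν² − sin²[x/(2R)]))`. -/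
noncomputable def hPlus (R ν x : ℝ) : ℝ :=
  (1 / ν) * (-(sin (x / (2 * R))) ^ 2
    + cos (x / (2 * R)) * Real.sqrt (ν ^ 2 - (sin (x / (2 * R))) ^ 2))

/-- `H(α,ν) = R((α/ν)√(ν² − α²) + ν arcsin(α/ν))`. -/
noncomputable def Hfun (R α ν : ℝ) : ℝ :=
  R * ((α / ν) * Real.sqrt (ν ^ 2 - α ^ 2) + ν * arcsin (α / ν))

/-!
Since `∂H/∂α (α, ν) = 2R√(ν² − α²)/ν`, the function `h₊` has the explicit primitive
`F(x) = R(sin t cos t − t)/ν + H(sin t, ν)` with `t = x/(2R)`. Using `l₁ = πR − l₂`,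
the integral is `2F(πR) − F(l₂) − F(2πR − l₂)`; the reflection `t ↦ π − t` fixes `sin t`
and negates `sin t cos t`, so everything but the `H` terms cancels.
-/

lemma hasDerivAt_Hfun (R : ℝ) {α ν : ℝ} (hα : |α| < ν) :
    HasDerivAt (fun a => Hfun R a ν) (2 * R * √(ν ^ 2 - α ^ 2) / ν) α := by
  have hν : 0 < ν := (abs_nonneg α).trans_lt hα
  have hpos : 0 < ν ^ 2 - α ^ 2 := by nlinarith [sq_abs α, abs_nonneg α]
  have hratio : |α / ν| < 1 := by rwa [abs_div, abs_of_pos hν, div_lt_one hν]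
  have hsqrt_ratio : √(1 - (α / ν) ^ 2) = √(ν ^ 2 - α ^ 2) / ν := by
    rw [show 1 - (α / ν) ^ 2 = (ν ^ 2 - α ^ 2) / ν ^ 2 by field_simp, sqrt_div hpos.le,
      sqrt_sq hν.le]
  have hsqrt : HasDerivAt (fun a => √(ν ^ 2 - a ^ 2)) (-α / √(ν ^ 2 - α ^ 2)) α := by
    convert ((hasDerivAt_pow 2 α).const_sub (ν ^ 2)).sqrt hpos.ne' using 1
    field_simp
    push_cast
    ring
  have harcsin : HasDerivAt (fun a => arcsin (a / ν)) (1 / √(ν ^ 2 - α ^ 2)) α := by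
    have h := (hasDerivAt_arcsin (abs_lt.1 hratio).1.ne' (abs_lt.1 hratio).2.ne).comp α
      ((hasDerivAt_id α).div_const ν)
    refine h.congr_deriv ?_
    rw [hsqrt_ratio]
    field_simp
  refine ((((hasDerivAt_id' α).div_const ν).mul hsqrt).add (harcsin.const_mul ν)).const_mul R
    |>.congr_deriv ?_
  have hs : √(ν ^ 2 - α ^ 2) ^ 2 = ν ^ 2 - α ^ 2 := sq_sqrt hpos.le
  have hs0 : √(ν ^ 2 - α ^ 2) ≠ 0 := (sqrt_pos.2 hpos).ne'
  field_simp
  linear_combination -R * hs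

noncomputable def hPlusPrimitive (R ν x : ℝ) : ℝ :=
  R * (sin (x / (2 * R)) * cos (x / (2 * R)) - x / (2 * R)) / ν
    + Hfun R (sin (x / (2 * R))) ν

lemma hasDerivAt_hPlusPrimitive {R ν : ℝ} (hR : R ≠ 0) (hν : 1 < ν) (x : ℝ) :
    HasDerivAt (hPlusPrimitive R ν) (hPlus R ν x) x := by
  have ht : HasDerivAt (fun y => y / (2 * R)) (1 / (2 * R)) x := (hasDerivAt_id x).div_const _
  have hsin_lt : |sin (x / (2 * R))| < ν := (abs_sin_le_one _).trans_lt hν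
  have hsincos := ((ht.sin.mul ht.cos).sub ht).const_mul R |>.div_const ν
  have hH := (hasDerivAt_Hfun R hsin_lt).comp x ht.sin
  refine (hsincos.add hH).congr_deriv ?_
  simp only [hPlus]
  generalize x / (2 * R) = t
  field_simp
  linear_combination sin_sq_add_cos_sq t

lemma continuous_hPlus (R ν : ℝ) : Continuous (hPlus R ν) := by
  unfold hPlus
  fun_prop

lemma integral_hPlus {R ν : ℝ} (hR : R ≠ 0) (hν : 1 < ν) (a b : ℝ) :
    ∫ x in a..b, hPlus R ν x = hPlusPrimitive R ν b - hPlusPrimitive R ν a :=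
  integral_eq_sub_of_hasDerivAt (fun x _ => hasDerivAt_hPlusPrimitive hR hν x)
    ((continuous_hPlus R ν).intervalIntegrable a b)

theorem integral_h_next_nearest_neighbor_general (R ν l₁ l₂ : ℝ) (hR : 0 < R) (hν : 1 < ν)
    (hsum : l₁ + l₂ = π * R) :
    ∫ σ in (0 : ℝ)..l₁, (hPlus R ν (σ + l₂) - hPlus R ν (σ + π * R)) =
      2 * Hfun R 1 ν - 2 * Hfun R (sin (l₂ / (2 * R))) ν := by
  have hint (c : ℝ) : IntervalIntegrable (fun σ => hPlus R ν (σ + c))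
      MeasureTheory.volume 0 l₁ :=
    ((continuous_hPlus R ν).comp (continuous_add_const c)).intervalIntegrable _ _
  rw [integral_sub (hint l₂) (hint (π * R)), integral_comp_add_right (hPlus R ν),
    integral_comp_add_right (hPlus R ν), integral_hPlus hR.ne' hν, integral_hPlus hR.ne' hν,
    zero_add, zero_add, hsum]
  have hquarter : π * R / (2 * R) = π / 2 := by field_simp
  have hreflect : (l₁ + π * R) / (2 * R) = π - l₂ / (2 * R) := by
    rw [eq_sub_of_add_eq hsum]
    field_simp
    ring
  simp only [hPlusPrimitive, hquarter, hreflect, sin_pi_sub, cos_pi_sub, sin_pi_div_two,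
    cos_pi_div_two]
  ring

/-- For `ν > 1` and `l₁, l₂ > 0` with `l₁ + l₂ = πR`, with `α₂ = sin(l₂/(2R))`,
one has `∫₀^{l₁} (h₊(σ + l₂) − h₊(σ + πR)) dσ = 2H(1,ν) − 2H(α₂,ν)`. -/
theorem integral_h_next_nearest_neighbor (R ν l₁ l₂ : ℝ) (hR : 0 < R) (hν : 1 < ν)
    (hl₁ : 0 < l₁) (hl₂ : 0 < l₂) (hsum : l₁ + l₂ = π * R) :
    ∫ σ in (0 : ℝ)..l₁, (hPlus R ν (σ + l₂) - hPlus R ν (σ + π * R)) =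
      2 * Hfun R 1 ν - 2 * Hfun R (sin (l₂ / (2 * R))) ν :=
  integral_h_next_nearest_neighbor_general R ν l₁ l₂ hR hν hsum
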